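/- arXiv:1211.2009 — 3 statements merged into one kernel-verified Lean document; each statement's English description precedes it below -/
import Mathlib

section
/- Let d : Fin N → ℝ≥0 and d' : Fin N → ℝ with Σᵢ dᵢ = 1 and Σᵢ dᵢ·(d'ᵢ)² < 1. Then the affine self-similarity map on L²([0,1], μ) (μ a probability measure adapted to the subdivision) given by (S P)(x) = β'ᵢ + d'ᵢ · P((x−αᵢ)/aᵢ) on the i-th subinterval is a contraction, and hence has a unique fixed point P ∈ L²([0,1], μ). -/
/-!
Each piece `[αᵢ, αᵢ + aᵢ)` carries `dᵢ` times the image of `μ` under `y ↦ αᵢ + aᵢ y`, and these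
pieces exhaust `μ` because `Σ dᵢ = 1`. Changing variables on every piece gives
`∫ |SP - SQ|² dμ = (Σ dᵢ d'ᵢ²) ∫ |P - Q|² dμ`, so `S` is a contraction of the complete space
`L²(μ)` and Banach's fixed point theorem applies.
-/

open MeasureTheory Set Finset Function
open scoped NNReal ENNReal

section PartialSums

variable {ι M : Type*} [LinearOrder ι] [LocallyFiniteOrderBot ι] [AddCommMonoid M] [PartialOrder M]
  [IsOrderedAddMonoid M] {a α : ι → M}

theorem sum_Iio_add_le_sum_Iio (ha : ∀ i, 0 ≤ a i) {i j : ι} (hij : i < j) :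
    ∑ k ∈ Iio i, a k + a i ≤ ∑ k ∈ Iio j, a k := by
  rw [add_comm, ← Finset.sum_insert (s := Iio i) (by simp)]
  exact Finset.sum_le_sum_of_subset_of_nonneg
    (Finset.insert_subset (mem_Iio.2 hij) (Finset.Iio_subset_Iio hij.le)) fun k _ _ => ha k

theorem pairwise_disjoint_Ico_of_eq_sum_Iio (ha : ∀ i, 0 ≤ a i)
    (hα : ∀ i, α i = ∑ k ∈ Iio i, a k) :
    Pairwise (Disjoint on fun i => Ico (α i) (α i + a i)) := by
  refine (pairwise_disjoint_on _).2 fun i j hij => Set.disjoint_left.2 fun x hi hj => ?_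
  have : α i + a i ≤ α j := by rw [hα, hα]; exact sum_Iio_add_le_sum_Iio ha hij
  exact hi.2.not_ge (this.trans hj.1)

end PartialSums

structure IsSelfSimilar {X ι : Type*} [MeasurableSpace X] (μ : Measure X) (s : ι → Set X)
    (e : ι → X ≃ᵐ X) (d : ι → ℝ≥0) : Prop where
  measurableSet : ∀ i, MeasurableSet (s i)
  pairwise_disjoint : Pairwise (Disjoint on s)
  restrict_eq : ∀ i, μ.restrict (s i) = d i • μ.map (e i)

namespace IsSelfSimilar

variable {X ι : Type*} [MeasurableSpace X] {μ : Measure X} {s : ι → Set X}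
  {e : ι → X ≃ᵐ X} {d : ι → ℝ≥0}

theorem setLIntegral_eq (h : IsSelfSimilar μ s e d) (i : ι) (g : X → ℝ≥0∞) :
    ∫⁻ x in s i, g x ∂μ = d i * ∫⁻ y, g (e i y) ∂μ := by
  rw [h.restrict_eq i, lintegral_smul_measure, lintegral_map_equiv, ENNReal.smul_def, smul_eq_mul]

variable [IsProbabilityMeasure μ]

theorem measure_apply (h : IsSelfSimilar μ s e d) (i : ι) : μ (s i) = d i := by
  simpa using h.setLIntegral_eq i 1

variable [Fintype ι]

theorem ae_mem_iUnion (h : IsSelfSimilar μ s e d) (hd : ∑ i, d i = 1) :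
    ∀ᵐ x ∂μ, x ∈ ⋃ i, s i := by
  rw [ae_mem_iff_measure_eq (MeasurableSet.iUnion h.measurableSet).nullMeasurableSet,
    measure_iUnion h.pairwise_disjoint h.measurableSet, tsum_fintype]
  simp [h.measure_apply, ← ENNReal.ofNNReal_finsetSum, hd]

theorem lintegral_eq_sum_setLIntegral (h : IsSelfSimilar μ s e d) (hd : ∑ i, d i = 1)
    (g : X → ℝ≥0∞) : ∫⁻ x, g x ∂μ = ∑ i, ∫⁻ x in s i, g x ∂μ := by
  rw [← tsum_fintype (L := .unconditional ι),
    ← lintegral_iUnion h.measurableSet h.pairwise_disjoint, Measure.restrict_eq_self_of_ae_mem (h.ae_mem_iUnion hd)]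

variable {β' d' : ι → ℝ} {S : (X → ℝ) → X → ℝ}

theorem lintegral_enorm_sub_rpow (h : IsSelfSimilar μ s e d) (hd : ∑ i, d i = 1)
    (hS : ∀ P i, ∀ x ∈ s i, S P x = β' i + d' i * P ((e i).symm x)) (P Q : X → ℝ)
    {r : ℝ} (hr : 0 ≤ r) :
    ∫⁻ x, ‖S P x - S Q x‖ₑ ^ r ∂μ =
      (∑ i, d i * ‖d' i‖ₑ ^ r) * ∫⁻ x, ‖P x - Q x‖ₑ ^ r ∂μ := by
  calc ∫⁻ x, ‖S P x - S Q x‖ₑ ^ r ∂μ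
      = ∑ i, ∫⁻ x in s i, ‖d' i‖ₑ ^ r * ‖P ((e i).symm x) - Q ((e i).symm x)‖ₑ ^ r ∂μ := by
        rw [h.lintegral_eq_sum_setLIntegral hd]
        refine Finset.sum_congr rfl fun i _ => setLIntegral_congr_fun (h.measurableSet i) ?_
        intro x hx
        dsimp only
        rw [hS P i x hx, hS Q i x hx, add_sub_add_left_eq_sub, ← mul_sub, enorm_mul,
          ENNReal.mul_rpow_of_nonneg _ _ hr]
    _ = ∑ i, d i * ‖d' i‖ₑ ^ r * ∫⁻ x, ‖P x - Q x‖ₑ ^ r ∂μ := by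
        refine Finset.sum_congr rfl fun i _ => ?_
        rw [h.setLIntegral_eq, lintegral_const_mul' _ _ (by finiteness), mul_assoc]
        simp only [MeasurableEquiv.symm_apply_apply]
    _ = _ := (Finset.sum_mul ..).symm

theorem eLpNorm_sub (h : IsSelfSimilar μ s e d) (hd : ∑ i, d i = 1)
    (hS : ∀ P i, ∀ x ∈ s i, S P x = β' i + d' i * P ((e i).symm x)) {p : ℝ≥0∞}
    (hp0 : p ≠ 0) (hp : p ≠ ∞) (P Q : X → ℝ) :
    eLpNorm (S P - S Q) p μ =
      (∑ i, d i * ‖d' i‖ₑ ^ p.toReal) ^ (1 / p.toReal) * eLpNorm (P - Q) p μ := by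
  simp only [eLpNorm_eq_lintegral_rpow_enorm_toReal hp0 hp, Pi.sub_apply]
  rw [h.lintegral_enorm_sub_rpow hd hS P Q ENNReal.toReal_nonneg,
    ENNReal.mul_rpow_of_nonneg _ _ (by positivity)]

theorem ae_eq_sum_indicator (h : IsSelfSimilar μ s e d) (hd : ∑ i, d i = 1)
    (hS : ∀ P i, ∀ x ∈ s i, S P x = β' i + d' i * P ((e i).symm x)) (P : X → ℝ) :
    S P =ᵐ[μ] ∑ i, (s i).indicator fun x => β' i + d' i * P ((e i).symm x) := by
  filter_upwards [h.ae_mem_iUnion hd] with x hx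
  obtain ⟨j, hj⟩ := mem_iUnion.1 hx
  rw [Finset.sum_apply, Finset.sum_eq_single j, indicator_of_mem hj, hS P j x hj]
  · exact fun i _ hij => indicator_of_notMem (disjoint_left.1 (h.pairwise_disjoint hij.symm) hj) _
  · simp

theorem memLp (h : IsSelfSimilar μ s e d) (hd : ∑ i, d i = 1)
    (hS : ∀ P i, ∀ x ∈ s i, S P x = β' i + d' i * P ((e i).symm x)) {p : ℝ≥0∞} {P : X → ℝ}
    (hP : MemLp P p μ) : MemLp (S P) p μ := by
  refine (memLp_finsetSum' _ fun i _ => ?_).ae_eq (h.ae_eq_sum_indicator hd hS P).symm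
  rw [memLp_indicator_iff_restrict (h.measurableSet i), h.restrict_eq i, ENNReal.smul_def]
  refine MemLp.smul_measure ?_ ENNReal.coe_ne_top
  rw [(e i).memLp_map_measure_iff]
  simp only [Function.comp_def, MeasurableEquiv.symm_apply_apply]
  exact (memLp_const (β' i)).add (hP.const_mul (d' i))

theorem eLpNorm_two_sub (h : IsSelfSimilar μ s e d) (hd : ∑ i, d i = 1)
    (hS : ∀ P i, ∀ x ∈ s i, S P x = β' i + d' i * P ((e i).symm x)) (P Q : X → ℝ) :
    eLpNorm (S P - S Q) 2 μ =
      ENNReal.ofReal √(∑ i, (d i : ℝ) * d' i ^ 2) * eLpNorm (P - Q) 2 μ := by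
  have hnonneg : ∀ i, 0 ≤ (d i : ℝ) * d' i ^ 2 := fun i => by positivity
  rw [h.eLpNorm_sub hd hS two_ne_zero ENNReal.ofNat_ne_top, Real.sqrt_eq_rpow,
    ← ENNReal.ofReal_rpow_of_nonneg (sum_nonneg fun i _ => hnonneg i) (by norm_num),
    ENNReal.ofReal_sum_of_nonneg fun i _ => hnonneg i]
  simp only [ENNReal.toReal_ofNat, ENNReal.ofReal_mul NNReal.zero_le_coe,
    ENNReal.ofReal_coe_nnreal, Real.enorm_eq_ofReal_abs,
    ENNReal.ofReal_rpow_of_nonneg (abs_nonneg _) zero_le_two, Real.rpow_two, sq_abs]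

end IsSelfSimilar

theorem exists_ae_fixedPoint_of_eLpNorm_sub_le {X E : Type*} [MeasurableSpace X]
    {μ : Measure X} [NormedAddCommGroup E] [CompleteSpace E] {p : ℝ≥0∞} [Fact (1 ≤ p)]
    {T : (X → E) → X → E} {K : ℝ≥0} (hK : K < 1) (hT : ∀ f, MemLp f p μ → MemLp (T f) p μ)
    (hlip : ∀ f g, MemLp f p μ → MemLp g p μ →
      eLpNorm (T f - T g) p μ ≤ K * eLpNorm (f - g) p μ) :
    ∃ f, MemLp f p μ ∧ T f =ᵐ[μ] f ∧ ∀ g, MemLp g p μ → T g =ᵐ[μ] g → g =ᵐ[μ] f := by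
  let F : Lp E p μ → Lp E p μ := fun f => (hT f (Lp.memLp f)).toLp _
  have hF : ContractingWith K F := ⟨hK, fun f g => by
    dsimp only [F]
    rw [Lp.edist_toLp_toLp, Lp.edist_def]
    exact hlip f g (Lp.memLp f) (Lp.memLp g)⟩
  obtain ⟨u, hu⟩ : ∃ u, F u = u := ⟨_, hF.fixedPoint_isFixedPt⟩
  set f₀ : X → E := ⇑u
  have hf₀ : MemLp f₀ p μ := Lp.memLp u
  have hfix : T f₀ =ᵐ[μ] f₀ := by
    have hFu : ⇑(F u) =ᵐ[μ] T f₀ := (hT u hf₀).coeFn_toLp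
    rw [hu] at hFu
    exact hFu.symm
  refine ⟨f₀, hf₀, hfix, fun g hg hgfix => ?_⟩
  have hle : eLpNorm (g - f₀) p μ ≤ K * eLpNorm (g - f₀) p μ :=
    calc eLpNorm (g - f₀) p μ = eLpNorm (T g - T f₀) p μ :=
          eLpNorm_congr_ae (hgfix.sub hfix).symm
      _ ≤ _ := hlip g f₀ hg hf₀
  have hzero : eLpNorm (g - f₀) p μ = 0 := by
    by_contra hne
    have hlt : (K : ℝ≥0∞) * eLpNorm (g - f₀) p μ < 1 * eLpNorm (g - f₀) p μ :=
      ENNReal.mul_lt_mul_left hne (hg.sub hf₀).eLpNorm_ne_top (by exact_mod_cast hK)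
    exact (hle.trans_lt (hlt.trans_eq (one_mul _))).false
  filter_upwards [(eLpNorm_eq_zero_iff (hg.sub hf₀).aestronglyMeasurable
    (one_pos.trans_le Fact.out).ne').1 hzero] with x hx
  exact sub_eq_zero.1 hx

def affineMeasurableEquiv {𝕜 : Type*} [Field 𝕜] [MeasurableSpace 𝕜] [MeasurableAdd 𝕜]
    [MeasurableMul 𝕜] (c : 𝕜) {b : 𝕜} (hb : b ≠ 0) : 𝕜 ≃ᵐ 𝕜 :=
  (MeasurableEquiv.mulLeft₀ b hb).trans (MeasurableEquiv.addLeft c)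

theorem affineMeasurableEquiv_symm_apply {𝕜 : Type*} [Field 𝕜] [MeasurableSpace 𝕜]
    [MeasurableAdd 𝕜] [MeasurableMul 𝕜] (c : 𝕜) {b : 𝕜} (hb : b ≠ 0) (x : 𝕜) :
    (affineMeasurableEquiv c hb).symm x = (x - c) / b := by
  simp [affineMeasurableEquiv, div_eq_inv_mul, neg_add_eq_sub]

theorem stmt7_general {N : ℕ} (a : Fin N → ℝ) (d : Fin N → NNReal) (d' β' : Fin N → ℝ)
    (α : Fin N → ℝ) (ha : ∀ i, 0 < a i) (hα : ∀ i, α i = ∑ k ∈ Finset.Iio i, a k)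
    (hsumd : ∑ i, (d i : ℝ) = 1)
    (hcontr : ∑ i, (d i : ℝ) * (d' i) ^ 2 < 1)
    (μ : Measure ℝ) [IsProbabilityMeasure μ]
    (hμ : ∀ i : Fin N, μ.restrict (Ico (α i) (α i + a i)) =
        (d i) • μ.map (fun x => α i + a i * x))
    (S : (ℝ → ℝ) → (ℝ → ℝ))
    (hS : ∀ P : ℝ → ℝ, ∀ i : Fin N, ∀ x ∈ Ico (α i) (α i + a i),
        S P x = β' i + d' i * P ((x - α i) / a i)) :
    (∀ P Q : ℝ → ℝ, MemLp P 2 μ → MemLp Q 2 μ →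
        eLpNorm (S P - S Q) 2 μ ≤
          ENNReal.ofReal (Real.sqrt (∑ i, (d i : ℝ) * (d' i) ^ 2)) *
            eLpNorm (P - Q) 2 μ) ∧
    (∃ P : ℝ → ℝ, MemLp P 2 μ ∧ S P =ᵐ[μ] P ∧
        ∀ Q : ℝ → ℝ, MemLp Q 2 μ → S Q =ᵐ[μ] Q → Q =ᵐ[μ] P) := by
  let e : Fin N → ℝ ≃ᵐ ℝ := fun i => affineMeasurableEquiv (α i) (ha i).ne'
  have hss : IsSelfSimilar μ (fun i => Ico (α i) (α i + a i)) e d :=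
    ⟨fun _ => measurableSet_Ico, pairwise_disjoint_Ico_of_eq_sum_Iio (fun i => (ha i).le) hα, hμ⟩
  have hd : ∑ i, d i = 1 := NNReal.coe_injective (by simpa using hsumd)
  have hS' : ∀ P i, ∀ x ∈ Ico (α i) (α i + a i), S P x = β' i + d' i * P ((e i).symm x) := by
    simpa only [e, affineMeasurableEquiv_symm_apply] using hS
  have hnorm := hss.eLpNorm_two_sub hd hS'
  refine ⟨fun P Q _ _ => (hnorm P Q).le, ?_⟩
  have : Fact ((1 : ℝ≥0∞) ≤ 2) := ⟨one_le_two⟩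
  refine exists_ae_fixedPoint_of_eLpNorm_sub_le (K := (√(∑ i, (d i : ℝ) * d' i ^ 2)).toNNReal)
    ?_ (fun _ => hss.memLp hd hS') fun P Q _ _ => (hnorm P Q).le
  rw [Real.toNNReal_lt_one, Real.sqrt_lt' one_pos, one_pow]
  exact hcontr

/-- Under `Σ dᵢ = 1` and `Σ dᵢ (d'ᵢ)² < 1`, the affine
self-similarity map `(S P)(x) = β'ᵢ + d'ᵢ · P((x − αᵢ)/aᵢ)` on the `i`-th
subinterval is a contraction on `L²([0,1], μ)` (with contraction constant
`√(Σ dᵢ (d'ᵢ)²)`), hence admits a unique (`μ`-a.e.) fixed point `P`. -/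
theorem stmt7 {N : ℕ} (a : Fin N → ℝ) (d : Fin N → NNReal) (d' β' : Fin N → ℝ)
    (α : Fin N → ℝ) (ha : ∀ i, 0 < a i) (hα : ∀ i, α i = ∑ k ∈ Finset.Iio i, a k)
    (hsuma : ∑ i, a i = 1) (hsumd : ∑ i, (d i : ℝ) = 1)
    (hcontr : ∑ i, (d i : ℝ) * (d' i) ^ 2 < 1)
    (μ : Measure ℝ) [IsProbabilityMeasure μ]
    (hsupp : μ (Icc 0 1)ᶜ = 0)
    (hμ : ∀ i : Fin N, μ.restrict (Ico (α i) (α i + a i)) =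
        (d i) • μ.map (fun x => α i + a i * x))
    (S : (ℝ → ℝ) → (ℝ → ℝ))
    (hS : ∀ P : ℝ → ℝ, ∀ i : Fin N, ∀ x ∈ Ico (α i) (α i + a i),
        S P x = β' i + d' i * P ((x - α i) / a i)) :
    (∀ P Q : ℝ → ℝ, MemLp P 2 μ → MemLp Q 2 μ →
        eLpNorm (S P - S Q) 2 μ ≤
          ENNReal.ofReal (Real.sqrt (∑ i, (d i : ℝ) * (d' i) ^ 2)) *
            eLpNorm (P - Q) 2 μ) ∧
    (∃ P : ℝ → ℝ, MemLp P 2 μ ∧ S P =ᵐ[μ] P ∧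
        ∀ Q : ℝ → ℝ, MemLp Q 2 μ → S Q =ᵐ[μ] Q → Q =ᵐ[μ] P) :=
  stmt7_general a d d' β' α ha hα hsumd hcontr μ hμ S hS
end

section
/- Let f be a finite nonnegative Borel measure on [0,1] and r a finite nonnegative Borel measure with no common atoms with f. Then for every ε > 0 there exists a finite partition 0 = ζ₀ < ζ₁ < … < ζ_{n+1} = 1 by points that are atoms of neither f nor r, such that for each k, either f([ζ_k, ζ_{k+1}]) < ε³ or r([ζ_k, ζ_{k+1}]) < ε². -/
open MeasureTheory Set

/-!
Each point of `[0,1]` is an atom of at most one of the two measures, so by outer regularity it has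
a small open interval around it on which that measure is small; since atoms are countable, the
endpoints can be chosen to be atoms of neither measure. Finitely many of these intervals cover
`[0,1]`, and their endpoints inside `[0,1]` cut it into cells each lying in one of the intervals.
-/

theorem MeasureTheory.Measure.countable_setOf_measure_singleton_pos {α : Type*}
    [MeasurableSpace α] [MeasurableSingletonClass α] (μ : Measure α) [SFinite μ] :
    {x | 0 < μ {x}}.Countable := by
  simpa [ofPred_eq_eq_singleton] using Measure.countable_meas_level_set_pos (μ := μ) measurable_id

theorem exists_mem_Ioo_measure_Icc_lt_of_countable {μ : Measure ℝ} [μ.OuterRegular] {S : Set ℝ}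
    (hS : S.Countable) {x : ℝ} (hx : μ {x} = 0) {δ : ENNReal} (hδ : 0 < δ) :
    ∃ a b, a ∉ S ∧ b ∉ S ∧ x ∈ Ioo a b ∧ μ (Icc a b) < δ := by
  obtain ⟨U, hxU, hU, hμU⟩ := Set.exists_isOpen_lt_of_lt (μ := μ) {x} δ (hx ▸ hδ)
  obtain ⟨l, u, hxlu, hluU⟩ := mem_nhds_iff_exists_Ioo_subset.mp (hU.mem_nhds (hxU rfl))
  have hdense : Dense Sᶜ := hS.dense_compl ℝ
  obtain ⟨a, haS, hla, hax⟩ := hdense.exists_between hxlu.1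
  obtain ⟨b, hbS, hxb, hbu⟩ := hdense.exists_between hxlu.2
  exact ⟨a, b, haS, hbS, ⟨hax, hxb⟩,
    (measure_mono ((Icc_subset_Ioo hla hbu).trans hluU)).trans_lt hμU⟩

theorem exists_mem_Ioo_nonatom_endpoints {f r : Measure ℝ} [IsFiniteMeasure f]
    [IsFiniteMeasure r] (hatoms : ∀ x : ℝ, f {x} = 0 ∨ r {x} = 0) {δf δr : ENNReal}
    (hδf : 0 < δf) (hδr : 0 < δr) (x : ℝ) :
    ∃ a b, x ∈ Ioo a b ∧ (f {a} = 0 ∧ r {a} = 0) ∧ (f {b} = 0 ∧ r {b} = 0) ∧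
      (f (Icc a b) < δf ∨ r (Icc a b) < δr) := by
  set S := {y | 0 < f {y}} ∪ {y | 0 < r {y}}
  have hS : S.Countable := f.countable_setOf_measure_singleton_pos.union
    r.countable_setOf_measure_singleton_pos
  have hnonatom : ∀ y ∉ S, f {y} = 0 ∧ r {y} = 0 := by
    simp [S]
  rcases hatoms x with hx | hx
  · obtain ⟨a, b, haS, hbS, hxab, hsmall⟩ := exists_mem_Ioo_measure_Icc_lt_of_countable hS hx hδf
    exact ⟨a, b, hxab, hnonatom a haS, hnonatom b hbS, .inl hsmall⟩
  · obtain ⟨a, b, haS, hbS, hxab, hsmall⟩ := exists_mem_Ioo_measure_Icc_lt_of_countable hS hx hδr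
    exact ⟨a, b, hxab, hnonatom a haS, hnonatom b hbS, .inr hsmall⟩

section Partition

variable {α : Type*} [LinearOrder α]

theorem Finset.exists_strictMono_fin_range_eq {s : Finset α} {l u : α} (hl : l ∈ s) (hu : u ∈ s)
    (hlu : l < u) (hs : ∀ y ∈ s, y ∈ Set.Icc l u) :
    ∃ (n : ℕ) (ζ : Fin (n + 2) → α),
      StrictMono ζ ∧ ζ 0 = l ∧ ζ (Fin.last (n + 1)) = u ∧ Set.range ζ = s := by
  have hcard : 2 ≤ s.card := Finset.one_lt_card.mpr ⟨l, hl, u, hu, hlu.ne⟩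
  obtain ⟨n, hn⟩ : ∃ n, s.card = n + 2 := ⟨s.card - 2, by omega⟩
  set ζ := s.orderEmbOfFin hn
  have hmem : ∀ y ∈ s, y ∈ Set.range ζ := fun y hy => by
    rwa [s.range_orderEmbOfFin hn]
  obtain ⟨i, hi⟩ := hmem l hl
  obtain ⟨j, hj⟩ := hmem u hu
  refine ⟨n, ζ, ζ.strictMono, ?_, ?_, s.range_orderEmbOfFin hn⟩
  · exact le_antisymm (hi ▸ ζ.monotone (Fin.zero_le i)) (hs _ (s.orderEmbOfFin_mem hn 0)).1
  · exact le_antisymm (hs _ (s.orderEmbOfFin_mem hn _)).2 (hj ▸ ζ.monotone (Fin.le_last j))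

theorem StrictMono.notMem_Ioo_castSucc_succ {n : ℕ} {ζ : Fin (n + 1) → α} (hζ : StrictMono ζ)
    (k : Fin n) (j : Fin (n + 1)) : ζ j ∉ Ioo (ζ k.castSucc) (ζ k.succ) := by
  rintro ⟨hkj, hjk⟩
  exact (hζ.lt_iff_lt.mp hjk).not_ge (Fin.castSucc_lt_iff_succ_le.mp (hζ.lt_iff_lt.mp hkj))

theorem Icc_subset_Icc_of_mem_Ioo_of_notMem {a b l u m : α} (hm : m ∈ Ioo l u)
    (hm' : m ∈ Ioo a b) (ha : a ∉ Ioo l u) (hb : b ∉ Ioo l u) : Icc l u ⊆ Icc a b :=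
  Icc_subset_Icc (not_lt.mp fun h => ha ⟨h, hm'.1.trans hm.2⟩)
    (not_lt.mp fun h => hb ⟨hm.1.trans hm'.2, h⟩)

theorem exists_partition_subordinate_Ioo_cover [DenselyOrdered α] {ι : Type*} {t : Finset ι}
    {a b : ι → α} {l u : α} (hlu : l < u) (hcover : Icc l u ⊆ ⋃ i ∈ t, Ioo (a i) (b i)) :
    ∃ (n : ℕ) (ζ : Fin (n + 2) → α),
      StrictMono ζ ∧ ζ 0 = l ∧ ζ (Fin.last (n + 1)) = u ∧
      (∀ k : Fin (n + 2), k ≠ 0 → k ≠ Fin.last (n + 1) → ζ k ∈ a '' t ∪ b '' t) ∧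
      ∀ k : Fin (n + 1), ∃ i ∈ t, Icc (ζ k.castSucc) (ζ k.succ) ⊆ Icc (a i) (b i) := by
  classical
  set P := (insert l (insert u (t.image a ∪ t.image b))).filter (· ∈ Icc l u)
  have hP : ∀ y ∈ Icc l u, y ∈ a '' t ∪ b '' t → y ∈ P := fun y hy hab =>
    Finset.mem_filter.mpr
      ⟨Finset.mem_insert_of_mem (Finset.mem_insert_of_mem (by simpa using hab)), hy⟩
  obtain ⟨n, ζ, hζ, h0, hlast, hrange⟩ := P.exists_strictMono_fin_range_eq
    (by simp [P, hlu.le]) (by simp [P, hlu.le]) hlu (fun y hy => (Finset.mem_filter.mp hy).2)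
  have hζP : ∀ k, ζ k ∈ P := fun k => Finset.mem_coe.mp (hrange ▸ mem_range_self k)
  refine ⟨n, ζ, hζ, h0, hlast, fun k hk0 hklast => ?_, fun k => ?_⟩
  · have hl : ζ k ≠ l := h0 ▸ hζ.injective.ne hk0
    have hu : ζ k ≠ u := hlast ▸ hζ.injective.ne hklast
    simpa [hl, hu] using (Finset.mem_filter.mp (hζP k)).1
  · set v := ζ k.castSucc
    set w := ζ k.succ
    have hvw : v < w := hζ Fin.castSucc_lt_succ
    have hlv : l ≤ v := h0 ▸ hζ.monotone (Fin.zero_le _)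
    have hwu : w ≤ u := hlast ▸ hζ.monotone (Fin.le_last _)
    have hgap : ∀ y ∈ a '' t ∪ b '' t, y ∉ Ioo v w := fun y hy hyvw => by
      obtain ⟨j, rfl⟩ : y ∈ range ζ :=
        hrange ▸ hP y ⟨hlv.trans hyvw.1.le, hyvw.2.le.trans hwu⟩ hy
      exact hζ.notMem_Ioo_castSucc_succ k j hyvw
    obtain ⟨m, hm⟩ := exists_between hvw
    obtain ⟨i, hi, hmi⟩ := mem_iUnion₂.mp (hcover ⟨hlv.trans hm.1.le, hm.2.le.trans hwu⟩)
    exact ⟨i, hi, Icc_subset_Icc_of_mem_Ioo_of_notMem hm hmi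
      (hgap _ (.inl (mem_image_of_mem a hi))) (hgap _ (.inr (mem_image_of_mem b hi)))⟩

end Partition

theorem stmt10_general (f r : Measure ℝ) [IsFiniteMeasure f] [IsFiniteMeasure r]
    (hatoms : ∀ x : ℝ, f {x} = 0 ∨ r {x} = 0) :
    ∀ ε : ℝ, 0 < ε →
      ∃ (n : ℕ) (ζ : Fin (n + 2) → ℝ),
        StrictMono ζ ∧ ζ 0 = 0 ∧ ζ (Fin.last (n + 1)) = 1 ∧
        (∀ k : Fin (n + 2), k ≠ 0 → k ≠ Fin.last (n + 1) →
          f {ζ k} = 0 ∧ r {ζ k} = 0) ∧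
        (∀ k : Fin (n + 1),
          f (Icc (ζ k.castSucc) (ζ k.succ)) < ENNReal.ofReal (ε ^ 3) ∨
          r (Icc (ζ k.castSucc) (ζ k.succ)) < ENNReal.ofReal (ε ^ 2)) := by
  intro ε hε
  choose a b hxab ha hb hsmall using exists_mem_Ioo_nonatom_endpoints hatoms
    (ENNReal.ofReal_pos.mpr (pow_pos hε 3)) (ENNReal.ofReal_pos.mpr (pow_pos hε 2))
  obtain ⟨t, hcover⟩ := isCompact_Icc.elim_finite_subcover (fun x => Ioo (a x) (b x))
    (fun _ => isOpen_Ioo) (fun x _ => mem_iUnion.mpr ⟨x, hxab x⟩)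
  obtain ⟨n, ζ, hζ, h0, hlast, hends, hcells⟩ :=
    exists_partition_subordinate_Ioo_cover zero_lt_one hcover
  refine ⟨n, ζ, hζ, h0, hlast, fun k hk0 hklast => ?_, fun k => ?_⟩
  · rcases hends k hk0 hklast with ⟨x, -, hx⟩ | ⟨x, -, hx⟩
    · exact hx ▸ ha x
    · exact hx ▸ hb x
  · obtain ⟨x, -, hsub⟩ := hcells k
    exact (hsmall x).imp (measure_mono hsub).trans_lt (measure_mono hsub).trans_lt

/-- If `f` and `r` are finite nonnegative Borel measures on `[0,1]`
with no common atoms, then for every `ε > 0` there is a finite partition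
`0 = ζ₀ < ζ₁ < … < ζ_{n+1} = 1` whose interior points are atoms of neither
measure, such that for each `k` either `f([ζₖ, ζₖ₊₁]) < ε³` or
`r([ζₖ, ζₖ₊₁]) < ε²`. -/
theorem stmt10 (f r : Measure ℝ) [IsFiniteMeasure f] [IsFiniteMeasure r]
    (hsupp_f : f (Icc 0 1)ᶜ = 0) (hsupp_r : r (Icc 0 1)ᶜ = 0)
    (hatoms : ∀ x : ℝ, f {x} = 0 ∨ r {x} = 0) :
    ∀ ε : ℝ, 0 < ε →
      ∃ (n : ℕ) (ζ : Fin (n + 2) → ℝ),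
        StrictMono ζ ∧ ζ 0 = 0 ∧ ζ (Fin.last (n + 1)) = 1 ∧
        (∀ k : Fin (n + 2), k ≠ 0 → k ≠ Fin.last (n + 1) →
          f {ζ k} = 0 ∧ r {ζ k} = 0) ∧
        (∀ k : Fin (n + 1),
          f (Icc (ζ k.castSucc) (ζ k.succ)) < ENNReal.ofReal (ε ^ 3) ∨
          r (Icc (ζ k.castSucc) (ζ k.succ)) < ENNReal.ofReal (ε ^ 2)) :=
  stmt10_general f r hatoms
end

section
/- With N as in the previous statement (eigenvalue counting function of the Neumann Laplacian on (0,1)), the inequality N(510) > N(85) + N(0) + N(85) holds, i.e., 8 > 3 + 1 + 3 = 7. This refutes the subadditivity claim N(λ) ≤ Σᵢ N(dᵢd'ᵢ·λ) for the parameters d₁d'₁ = d₃d'₃ = 1/6, d₂d'₂ = 0, λ = 510 (since 510/6 = 85). -/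
open Real

/-- The eigenvalue counting function of the Neumann Laplacian on `(0,1)`:
the eigenvalues are `λ_n = π²(n−1)²` for `n ≥ 1`, i.e. `π² m²` for `m ≥ 0`. -/
noncomputable def neumannCount (l : ℝ) : ℕ :=
  Nat.card {m : ℕ | (π : ℝ) ^ 2 * (m : ℝ) ^ 2 ≤ l}

lemma setOf_le_eq_Iic_of_strictMono {α : Type*} [Preorder α] {f : ℕ → α} (hf : StrictMono f)
    {l : α} {n : ℕ} (hlo : f n ≤ l) (hhi : l < f (n + 1)) : {m | f m ≤ l} = Set.Iic n := by
  ext m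
  refine ⟨fun hm => ?_, fun hm => (hf.monotone hm).trans hlo⟩
  by_contra hmn
  have hle : f (n + 1) ≤ f m := hf.monotone (by simpa using hmn)
  exact lt_irrefl _ (hhi.trans_le (hle.trans hm))

lemma strictMono_pi_sq_mul_sq : StrictMono fun m : ℕ => π ^ 2 * (m : ℝ) ^ 2 := by
  intro a b hab
  have : (a : ℝ) < b := by exact_mod_cast hab
  dsimp only
  gcongr

lemma neumannCount_eq_succ {l : ℝ} {n : ℕ} (hlo : π ^ 2 * (n : ℝ) ^ 2 ≤ l)
    (hhi : l < π ^ 2 * ((n : ℝ) + 1) ^ 2) : neumannCount l = n + 1 := by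
  have hhi' : l < π ^ 2 * ((n + 1 : ℕ) : ℝ) ^ 2 := by exact_mod_cast hhi
  rw [neumannCount, setOf_le_eq_Iic_of_strictMono strictMono_pi_sq_mul_sq hlo hhi',
    ← Finset.coe_Iic, Nat.card_coe_set_eq, Set.ncard_coe_finset, Nat.card_Iic]

lemma neumannCount_zero : neumannCount 0 = 1 :=
  neumannCount_eq_succ (n := 0) (by norm_num) (by norm_num [pi_pos])

lemma neumannCount_85 : neumannCount 85 = 3 :=
  neumannCount_eq_succ (n := 2) (by norm_num; nlinarith [pi_pos, pi_lt_d2])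
    (by norm_num; nlinarith [pi_gt_d2])

lemma neumannCount_510 : neumannCount 510 = 8 :=
  neumannCount_eq_succ (n := 7) (by norm_num; nlinarith [pi_pos, pi_lt_d2])
    (by norm_num; nlinarith [pi_gt_d2])

/-- The inequality `N(510) > N(85) + N(0) + N(85)` (i.e.
`8 > 3 + 1 + 3`) holds for the Neumann counting function, refuting the
subadditivity claim `N(λ) ≤ Σᵢ N(dᵢd'ᵢ λ)` for `d₁d'₁ = d₃d'₃ = 1/6`,
`d₂d'₂ = 0`, `λ = 510` (note `510/6 = 85`). -/
theorem stmt16 :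
    neumannCount 0 = 1 ∧ (1/6 : ℝ) * 510 = 85 ∧
    neumannCount 510 > neumannCount 85 + neumannCount 0 + neumannCount 85 ∧
    ¬ (neumannCount 510 ≤
        neumannCount ((1/3) * (1/2) * 510) + neumannCount ((0:ℝ) * 510) +
          neumannCount ((1/3) * (1/2) * 510)) := by
  have hprod : (1/3 : ℝ) * (1/2) * 510 = 85 := by norm_num
  rw [hprod, zero_mul, neumannCount_zero, neumannCount_85, neumannCount_510]
  norm_num
end
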